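/- Let 𝓛 be the Lindblad generator on M_N(ℂ) associated with a Hermitian matrix H and matrices L_1, …, L_m. If λ ∈ ℂ is an eigenvalue of 𝓛 viewed as a ℂ-linear endomorphism of M_N(ℂ) — i.e. there exists X ∈ M_N(ℂ), X ≠ 0, with 𝓛(X) = λ·X — then Re(λ) ≤ 0. -/

import Mathlib

open Matrix

noncomputable section

/-- The Lindblad generator associated with a Hamiltonian `H` and noise operators
`L 1, …, L m`:  `𝓛(ρ) = −i[H,ρ] + Σ_k (L_k ρ L_k† − ½(L_k† L_k ρ + ρ L_k† L_k))`. -/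
def lindblad {N m : ℕ} (H : Matrix (Fin N) (Fin N) ℂ)
    (L : Fin m → Matrix (Fin N) (Fin N) ℂ) :
    Matrix (Fin N) (Fin N) ℂ →ₗ[ℂ] Matrix (Fin N) (Fin N) ℂ :=
  (-Complex.I) • (LinearMap.mulLeft ℂ H - LinearMap.mulRight ℂ H)
    + ∑ k : Fin m,
      ((LinearMap.mulRight ℂ (L k)ᴴ).comp (LinearMap.mulLeft ℂ (L k))
        - (1 / 2 : ℂ) •
          (LinearMap.mulLeft ℂ ((L k)ᴴ * L k) + LinearMap.mulRight ℂ ((L k)ᴴ * L k)))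

/-!
Pass to the Heisenberg picture. The map `lindbladDual H L` is the adjoint of `lindblad H L` for
the pairing `tr (Aᴴ B)`, so it has an eigenvector `Y` with eigenvalue `conj λ`; since it commutes
with `ᴴ`, `Yᴴ` is an eigenvector with eigenvalue `λ`. The dual generator is a derivation up to a
positive term, `𝓛†(A B) = 𝓛†(A) B + A 𝓛†(B) + ∑ₖ [L_kᴴ, A] [B, L_k]`, whence
`2 Re λ • YᴴY ≤ 𝓛†(YᴴY)`. Now evaluate both sides at an eigenvector `v` of `P = YᴴY` for its
largest eigenvalue `c > 0`. The right side satisfies a maximum principle,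
`⟨v, 𝓛†(P) v⟩ ≤ 0`: the Hamiltonian term vanishes and `⟨L_k v, P L_k v⟩ ≤ c ‖L_k v‖²`.
The left side is `2 Re λ c ‖v‖²`, so `Re λ ≤ 0`.
-/

open scoped ComplexOrder MatrixOrder

theorem Matrix.exists_eigenvector_star_of_trace_adjoint {𝕜 m n : Type*} [RCLike 𝕜]
    [Fintype m] [Fintype n] {S T : Matrix m n 𝕜 →ₗ[𝕜] Matrix m n 𝕜}
    (hST : ∀ A B, ((S A)ᴴ * B).trace = (Aᴴ * T B).trace) {lam : 𝕜} {X : Matrix m n 𝕜}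
    (hX : X ≠ 0) (hTX : T X = lam • X) : ∃ Y ≠ 0, S Y = star lam • Y := by
  by_contra! hS
  set D := S - star lam • (1 : Module.End 𝕜 (Matrix m n 𝕜))
  have hD : Function.Injective D := by
    rw [← LinearMap.ker_eq_bot, LinearMap.ker_eq_bot']
    intro Y hY
    by_contra hY0
    exact hS Y hY0 (sub_eq_zero.mp hY)
  obtain ⟨A, rfl⟩ := LinearMap.injective_iff_surjective.mp hD X
  refine hX (trace_conjTranspose_mul_self_eq_zero_iff.mp ?_)
  calc ((D A)ᴴ * D A).trace
      = (Aᴴ * T (D A)).trace - lam * (Aᴴ * D A).trace := by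
        simp only [D, LinearMap.sub_apply, LinearMap.smul_apply, Module.End.one_apply,
          conjTranspose_sub, conjTranspose_smul, RCLike.star_def, RCLike.conj_conj]
        rw [Matrix.sub_mul, trace_sub, Matrix.smul_mul, trace_smul, hST, smul_eq_mul]
    _ = 0 := by simp [hTX, trace_smul]

variable {n : Type*} [Fintype n]

theorem Matrix.re_dotProduct_mulVec_mono {A B : Matrix n n ℂ} (h : A ≤ B) (v : n → ℂ) :
    (star v ⬝ᵥ A *ᵥ v).re ≤ (star v ⬝ᵥ B *ᵥ v).re := by
  have := (Matrix.le_iff.mp h).re_dotProduct_nonneg v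
  simpa [sub_mulVec, dotProduct_sub] using this

theorem Matrix.PosSemidef.exists_maximal_eigenvector [DecidableEq n] {P : Matrix n n ℂ}
    (hP : P.PosSemidef) (hP0 : P ≠ 0) :
    ∃ c : ℝ, 0 < c ∧ P ≤ c • 1 ∧ ∃ v ≠ 0, P *ᵥ v = c • v := by
  have : Nonempty n := not_isEmpty_iff.mp fun _ => hP0 (Subsingleton.elim _ _)
  obtain ⟨i, hi⟩ := Finite.exists_max hP.isHermitian.eigenvalues
  refine ⟨hP.isHermitian.eigenvalues i, ?_, ?_, _, ?_, hP.isHermitian.mulVec_eigenvectorBasis i⟩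
  · by_contra! hle
    refine hP0 (hP.isHermitian.eigenvalues_eq_zero_iff.mp (funext fun j => ?_))
    exact le_antisymm ((hi j).trans hle) (hP.eigenvalues_nonneg j)
  · rw [← Algebra.algebraMap_eq_smul_one]
    refine le_algebraMap_of_spectrum_le ?_ hP.isHermitian
    rw [hP.isHermitian.spectrum_real_eq_range_eigenvalues]
    rintro _ ⟨j, rfl⟩
    exact hi j
  · exact (WithLp.ofLp_eq_zero 2).ne.mpr (hP.isHermitian.eigenvectorBasis.orthonormal.ne_zero i)

theorem Matrix.star_vecMul_eq_smul_of_le_smul_one [DecidableEq n] {P : Matrix n n ℂ} {c : ℝ}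
    (hPc : P ≤ c • 1) {v : n → ℂ} (hv : P *ᵥ v = c • v) : star v ᵥ* P = c • star v := by
  have hP : P.IsHermitian := by
    simpa using (isHermitian_one.smul (IsSelfAdjoint.all c)).sub (le_iff.mp hPc).isHermitian
  rw [← hP.eq, ← star_mulVec, hv, star_smul, star_trivial]

def dissipator (K : Matrix n n ℂ) : Matrix n n ℂ →ₗ[ℂ] Matrix n n ℂ :=
  (LinearMap.mulRight ℂ Kᴴ).comp (LinearMap.mulLeft ℂ K)
    - (1 / 2 : ℂ) • (LinearMap.mulLeft ℂ (Kᴴ * K) + LinearMap.mulRight ℂ (Kᴴ * K))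

def dualDissipator (K : Matrix n n ℂ) : Matrix n n ℂ →ₗ[ℂ] Matrix n n ℂ :=
  (LinearMap.mulLeft ℂ Kᴴ).comp (LinearMap.mulRight ℂ K)
    - (1 / 2 : ℂ) • (LinearMap.mulLeft ℂ (Kᴴ * K) + LinearMap.mulRight ℂ (Kᴴ * K))

@[simp]
theorem dissipator_apply (K B : Matrix n n ℂ) :
    dissipator K B = K * B * Kᴴ - (1 / 2 : ℂ) • (Kᴴ * K * B + B * (Kᴴ * K)) := rfl

@[simp]
theorem dualDissipator_apply (K A : Matrix n n ℂ) :
    dualDissipator K A = Kᴴ * A * K - (1 / 2 : ℂ) • (Kᴴ * K * A + A * (Kᴴ * K)) := by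
  simp [dualDissipator, mul_assoc]

theorem trace_conjTranspose_dualDissipator_mul (K A B : Matrix n n ℂ) :
    ((dualDissipator K A)ᴴ * B).trace = (Aᴴ * dissipator K B).trace := by
  simp only [dualDissipator_apply, dissipator_apply, conjTranspose_sub, conjTranspose_smul,
    conjTranspose_add, conjTranspose_mul, conjTranspose_conjTranspose, sub_mul, add_mul,
    smul_mul_assoc, mul_sub, mul_add, mul_smul_comm, trace_sub, trace_add, trace_smul,
    mul_assoc, star_div₀, star_one, star_ofNat]
  have h₁ : (Kᴴ * (Aᴴ * (K * B))).trace = (Aᴴ * (K * (B * Kᴴ))).trace := by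
    rw [trace_mul_comm]
    simp only [mul_assoc]
  have h₂ : (Kᴴ * (K * (Aᴴ * B))).trace = (Aᴴ * (B * (Kᴴ * K))).trace := by
    rw [← mul_assoc, trace_mul_comm, mul_assoc]
  rw [h₁, h₂]

theorem dualDissipator_conjTranspose (K A : Matrix n n ℂ) :
    dualDissipator K Aᴴ = (dualDissipator K A)ᴴ := by
  simp only [dualDissipator_apply, conjTranspose_sub, conjTranspose_smul,
    conjTranspose_add, conjTranspose_mul, conjTranspose_conjTranspose, star_div₀, star_one,
    star_ofNat, mul_assoc]
  rw [add_comm (Kᴴ * (K * Aᴴ))]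

theorem dualDissipator_mul (K A B : Matrix n n ℂ) :
    dualDissipator K (A * B) = dualDissipator K A * B + A * dualDissipator K B
      + (Kᴴ * A - A * Kᴴ) * (B * K - K * B) := by
  simp only [dualDissipator_apply, sub_mul, mul_sub, add_mul, mul_add, smul_mul_assoc,
    mul_smul_comm, smul_add, mul_assoc]
  module

theorem re_dotProduct_dualDissipator_mulVec_nonpos [DecidableEq n] {P : Matrix n n ℂ} {c : ℝ}
    (hPc : P ≤ c • 1) {v : n → ℂ} (hv : P *ᵥ v = c • v) (K : Matrix n n ℂ) :
    (star v ⬝ᵥ dualDissipator K P *ᵥ v).re ≤ 0 := by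
  set w := K *ᵥ v
  have hKPK : star v ⬝ᵥ (Kᴴ * P * K) *ᵥ v = star w ⬝ᵥ P *ᵥ w := by
    rw [← mulVec_mulVec, ← mulVec_mulVec, dotProduct_mulVec, ← star_mulVec]
  have hKK : star v ⬝ᵥ (Kᴴ * K) *ᵥ v = star w ⬝ᵥ w := by
    rw [← mulVec_mulVec, dotProduct_mulVec, ← star_mulVec]
  have hKKP : star v ⬝ᵥ (Kᴴ * K * P) *ᵥ v = c • (star w ⬝ᵥ w) := by
    rw [← mulVec_mulVec, hv, mulVec_smul, dotProduct_smul, hKK]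
  have hPKK : star v ⬝ᵥ (P * (Kᴴ * K)) *ᵥ v = c • (star w ⬝ᵥ w) := by
    rw [← mulVec_mulVec, dotProduct_mulVec, star_vecMul_eq_smul_of_le_smul_one hPc hv,
      smul_dotProduct, hKK]
  have hform : star v ⬝ᵥ dualDissipator K P *ᵥ v = star w ⬝ᵥ P *ᵥ w - c • (star w ⬝ᵥ w) := by
    simp only [dualDissipator_apply, sub_mulVec, smul_mulVec, add_mulVec, dotProduct_sub,
      dotProduct_smul, dotProduct_add, hKPK, hKKP, hPKK]
    module
  have hmax := re_dotProduct_mulVec_mono hPc w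
  rw [smul_mulVec, one_mulVec, dotProduct_smul, Complex.real_smul, Complex.re_ofReal_mul] at hmax
  rw [hform, Complex.sub_re, Complex.real_smul, Complex.re_ofReal_mul]
  exact sub_nonpos.mpr hmax

variable {ι : Type*} [Fintype ι]

def lindbladDual (H : Matrix n n ℂ) (L : ι → Matrix n n ℂ) :
    Matrix n n ℂ →ₗ[ℂ] Matrix n n ℂ :=
  Complex.I • (LinearMap.mulLeft ℂ H - LinearMap.mulRight ℂ H) + ∑ k, dualDissipator (L k)

theorem lindbladDual_apply (H : Matrix n n ℂ) (L : ι → Matrix n n ℂ) (A : Matrix n n ℂ) :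
    lindbladDual H L A = Complex.I • (H * A - A * H) + ∑ k, dualDissipator (L k) A := by
  simp [lindbladDual, LinearMap.sum_apply]

theorem lindblad_apply {N m : ℕ} (H : Matrix (Fin N) (Fin N) ℂ)
    (L : Fin m → Matrix (Fin N) (Fin N) ℂ) (B : Matrix (Fin N) (Fin N) ℂ) :
    lindblad H L B = (-Complex.I) • (H * B - B * H) + ∑ k, dissipator (L k) B := by
  simp [lindblad, dissipator, LinearMap.sum_apply]

theorem trace_conjTranspose_lindbladDual_mul {N m : ℕ} {H : Matrix (Fin N) (Fin N) ℂ}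
    (hH : H.IsHermitian) (L : Fin m → Matrix (Fin N) (Fin N) ℂ) (A B : Matrix (Fin N) (Fin N) ℂ) :
    ((lindbladDual H L A)ᴴ * B).trace = (Aᴴ * lindblad H L B).trace := by
  have hHam : ((Complex.I • (H * A - A * H))ᴴ * B).trace
      = (Aᴴ * ((-Complex.I) • (H * B - B * H))).trace := by
    simp only [conjTranspose_smul, conjTranspose_sub, conjTranspose_mul, hH.eq,
      Complex.star_def, Complex.conj_I, sub_mul, smul_mul_assoc, mul_sub, mul_smul_comm,
      trace_smul, trace_sub, mul_assoc]
    rw [trace_mul_comm H, mul_assoc]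
  simp only [lindbladDual_apply, lindblad_apply, conjTranspose_add, conjTranspose_sum, add_mul,
    Finset.sum_mul, mul_add, Finset.mul_sum, trace_add, trace_sum,
    trace_conjTranspose_dualDissipator_mul, hHam]

theorem lindbladDual_conjTranspose {H : Matrix n n ℂ} (hH : H.IsHermitian)
    (L : ι → Matrix n n ℂ) (A : Matrix n n ℂ) :
    lindbladDual H L Aᴴ = (lindbladDual H L A)ᴴ := by
  simp only [lindbladDual_apply, conjTranspose_add, conjTranspose_sum, conjTranspose_smul,
    conjTranspose_sub, conjTranspose_mul, hH.eq, Complex.star_def, Complex.conj_I,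
    dualDissipator_conjTranspose]
  module

theorem lindbladDual_mul (H : Matrix n n ℂ) (L : ι → Matrix n n ℂ) (A B : Matrix n n ℂ) :
    lindbladDual H L (A * B) = lindbladDual H L A * B + A * lindbladDual H L B
      + ∑ k, ((L k)ᴴ * A - A * (L k)ᴴ) * (B * L k - L k * B) := by
  simp only [lindbladDual_apply, dualDissipator_mul, Finset.sum_add_distrib, add_mul, mul_add,
    Finset.sum_mul, Finset.mul_sum, smul_sub, sub_mul, mul_sub, smul_mul_assoc, mul_smul_comm,
    mul_assoc]
  module

theorem smul_conjTranspose_mul_self_le_lindbladDual {H : Matrix n n ℂ} (hH : H.IsHermitian)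
    (L : ι → Matrix n n ℂ) {lam : ℂ} {Y : Matrix n n ℂ}
    (hY : lindbladDual H L Y = star lam • Y) :
    (2 * lam.re) • (Yᴴ * Y) ≤ lindbladDual H L (Yᴴ * Y) := by
  have hYH : lindbladDual H L Yᴴ = lam • Yᴴ := by
    rw [lindbladDual_conjTranspose hH, hY, conjTranspose_smul, star_star]
  have hsq : ∀ k, ((L k)ᴴ * Yᴴ - Yᴴ * (L k)ᴴ) * (Y * L k - L k * Y)
      = (Y * L k - L k * Y)ᴴ * (Y * L k - L k * Y) := fun k => by
    rw [conjTranspose_sub, conjTranspose_mul, conjTranspose_mul]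
  have hre : (2 * lam.re) • (Yᴴ * Y) = lam • (Yᴴ * Y) + star lam • (Yᴴ * Y) := by
    rw [← add_smul, Complex.star_def, Complex.add_conj, ← Complex.coe_smul]
  rw [lindbladDual_mul, hYH, hY, smul_mul_assoc, mul_smul_comm, ← hre]
  exact le_add_of_nonneg_right (Finset.sum_nonneg fun k _ =>
    hsq k ▸ (posSemidef_conjTranspose_mul_self _).nonneg)

theorem re_dotProduct_lindbladDual_mulVec_nonpos [DecidableEq n] (H : Matrix n n ℂ)
    (L : ι → Matrix n n ℂ) {P : Matrix n n ℂ} {c : ℝ} (hPc : P ≤ c • 1) {v : n → ℂ}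
    (hv : P *ᵥ v = c • v) :
    (star v ⬝ᵥ lindbladDual H L P *ᵥ v).re ≤ 0 := by
  have hHam : star v ⬝ᵥ (H * P - P * H) *ᵥ v = 0 := by
    rw [sub_mulVec, dotProduct_sub, ← mulVec_mulVec, ← mulVec_mulVec, hv, mulVec_smul,
      dotProduct_mulVec (star v) P, star_vecMul_eq_smul_of_le_smul_one hPc hv,
      smul_dotProduct, dotProduct_smul, sub_self]
  simp only [lindbladDual_apply, add_mulVec, smul_mulVec, dotProduct_add, dotProduct_smul, hHam,
    smul_zero, zero_add, sum_mulVec, dotProduct_sum, Complex.re_sum]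
  exact Finset.sum_nonpos fun k _ => re_dotProduct_dualDissipator_mulVec_nonpos hPc hv (L k)

/-- Every eigenvalue of a Lindblad generator, viewed as a `ℂ`-linear endomorphism of
`M_N(ℂ)`, has nonpositive real part. -/
theorem lindblad_eigenvalue_re_nonpos {N m : ℕ}
    (H : Matrix (Fin N) (Fin N) ℂ) (hH : H.IsHermitian)
    (L : Fin m → Matrix (Fin N) (Fin N) ℂ)
    (lam : ℂ) (X : Matrix (Fin N) (Fin N) ℂ) (hX : X ≠ 0)
    (heig : lindblad H L X = lam • X) :
    lam.re ≤ 0 := by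
  obtain ⟨Y, hY0, hY⟩ :=
    exists_eigenvector_star_of_trace_adjoint (trace_conjTranspose_lindbladDual_mul hH L) hX heig
  obtain ⟨c, hc, hPc, v, hv0, hv⟩ :=
    (posSemidef_conjTranspose_mul_self Y).exists_maximal_eigenvector
      (by rwa [Ne, conjTranspose_mul_self_eq_zero])
  have hlow := re_dotProduct_mulVec_mono (smul_conjTranspose_mul_self_le_lindbladDual hH L hY) v
  have hup := re_dotProduct_lindbladDual_mulVec_nonpos H L hPc hv
  have hvv : 0 < (star v ⬝ᵥ v).re := (Complex.lt_def.mp (dotProduct_star_self_pos_iff.mpr hv0)).1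
  rw [smul_mulVec, hv, smul_smul, dotProduct_smul, Complex.real_smul, Complex.re_ofReal_mul] at hlow
  nlinarith [mul_pos hc hvv]
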